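/- Let F and G be two finite filtrations of subsets of the ground set of a finite matroid M (each a nested chain of subsets ending at E). There exists a basis of M that simultaneously minimizes the F-weight and the G-weight (equivalently, freely generates both filtrations) if and only if the family F ∪ G is modular, i.e., every pair (F_p, G_q) satisfies rk(F_p ∪ G_q) + rk(F_p ∩ G_q) = rk(F_p) + rk(G_q). -/

import Mathlib

/-!
Modularity is necessary by counting: if `B ∩ X` and `B ∩ Y` are bases of `X` and `Y`, then
`B ∩ (X ∪ Y)` and `B ∩ X ∩ Y` are independent subsets of `X ∪ Y` and `X ∩ Y` whose sizes add up
to `rk X + rk Y`, the upper bound given by submodularity.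

For sufficiency, build the basis along `G`. Given a basis `C` of `G j` that freely generates the
traces `F i ∩ G j`, choose in `M ／ C` a basis `J` of `G (j + 1) \ C` freely generating the chain
`F i ∩ G (j + 1)` (a single finite chain is always freely generated, by greedy extension).
Modularity of `(F i, G j)` says that contracting `C` lowers the rank of `F i ∩ G (j + 1)` by exactly
`rk (F i ∩ G j) = |C ∩ F i|`, so `(J ∪ C) ∩ F i` is a basis of `F i ∩ G (j + 1)`.
-/

/-- The rank of a set in a matroid: the maximal cardinality of an independent subset. -/
noncomputable def matroidRk {α : Type*} (M : Matroid α) (S : Set α) : ℕ :=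
  sSup {n : ℕ | ∃ I ⊆ S, M.Indep I ∧ I.ncard = n}

open Set

namespace Matroid

variable {α : Type*} {M : Matroid α} {A B C I J X Y Z : Set α}

def IsRkModularPair (M : Matroid α) (X Y : Set α) : Prop :=
  matroidRk M (X ∪ Y) + matroidRk M (X ∩ Y) = matroidRk M X + matroidRk M Y

lemma IsBasis.isBasis_inter_of_subset_indep (hIX : M.IsBasis (I ∩ X) Y) (hJ : M.Indep J)
    (hIJ : I ⊆ J) (hJXY : J ∩ X ⊆ Y) : M.IsBasis (J ∩ X) Y := by
  rwa [← hIX.eq_of_subset_indep (hJ.subset inter_subset_left) (inter_subset_inter_left X hIJ) hJXY]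

lemma exists_isBasis_inter_of_monotone (M : Matroid α) {k : ℕ} {f : Fin (k + 1) → Set α}
    (hf : Monotone f) (hY : Y ⊆ M.E) : ∃ B, M.IsBasis B Y ∧ ∀ i, M.IsBasis (B ∩ f i) (f i ∩ Y) := by
  have hprefix : ∀ k', ∃ I, M.IsBasis I (f k' ∩ Y) ∧ ∀ i ≤ k', M.IsBasis (I ∩ f i) (f i ∩ Y) := by
    refine Fin.induction ?_ ?_
    · obtain ⟨I, hI⟩ := M.exists_isBasis (f 0 ∩ Y) (inter_subset_right.trans hY)
      refine ⟨I, hI, fun i hi => ?_⟩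
      obtain rfl := Fin.le_zero_iff.1 hi
      rwa [inter_eq_left.2 (hI.subset.trans inter_subset_left)]
    · rintro k ⟨I, hI, hIf⟩
      obtain ⟨J, hJ, hIJ⟩ := hI.indep.subset_isBasis_of_subset
        (hI.subset.trans (inter_subset_inter_left _ (hf k.castSucc_le_succ)))
        (inter_subset_right.trans hY)
      refine ⟨J, hJ, fun i hi => ?_⟩
      obtain hi | rfl := hi.lt_or_eq
      · exact (hIf i (Fin.le_castSucc_iff.2 hi)).isBasis_inter_of_subset_indep hJ.indep hIJ
          fun x hx => ⟨hx.2, (hJ.subset hx.1).2⟩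
      · rwa [inter_eq_left.2 (hJ.subset.trans inter_subset_left)]
  obtain ⟨I, hI, hIf⟩ := hprefix (Fin.last k)
  obtain ⟨B, hB, hIB⟩ := hI.indep.subset_isBasis_of_subset (hI.subset.trans inter_subset_right) hY
  exact ⟨B, hB, fun i => (hIf i (Fin.le_last i)).isBasis_inter_of_subset_indep hB.indep hIB
    fun x hx => ⟨hx.2, hB.subset hx.1⟩⟩

section RankFinite

variable [M.RankFinite]

lemma IsBasis'.matroidRk_eq_ncard (hI : M.IsBasis' I X) : matroidRk M X = I.ncard := by
  refine IsGreatest.csSup_eq ⟨⟨I, hI.subset, hI.indep, rfl⟩, ?_⟩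
  rintro _ ⟨J, hJX, hJ, rfl⟩
  have hle : J.encard ≤ I.encard := hI.encard_eq_eRk ▸ hJ.encard_le_eRk_of_subset hJX
  rwa [← hJ.finite.cast_ncard_eq, ← hI.indep.finite.cast_ncard_eq, Nat.cast_le] at hle

lemma IsBasis.matroidRk_eq_ncard (hI : M.IsBasis I X) : matroidRk M X = I.ncard :=
  hI.isBasis'.matroidRk_eq_ncard

lemma cast_matroidRk (M : Matroid α) [M.RankFinite] (X : Set α) :
    (matroidRk M X : ℕ∞) = M.eRk X := by
  obtain ⟨I, hI⟩ := M.exists_isBasis' X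
  rw [hI.matroidRk_eq_ncard, hI.indep.finite.cast_ncard_eq, hI.encard_eq_eRk]

lemma Indep.ncard_le_matroidRk (hI : M.Indep I) (hIX : I ⊆ X) : I.ncard ≤ matroidRk M X := by
  have := hI.encard_le_eRk_of_subset hIX
  rwa [← hI.finite.cast_ncard_eq, ← cast_matroidRk, Nat.cast_le] at this

lemma Indep.isBasis_of_matroidRk_le_ncard (hI : M.Indep I) (hIX : I ⊆ X) (hX : X ⊆ M.E)
    (h : matroidRk M X ≤ I.ncard) : M.IsBasis I X := by
  refine hI.isBasis_of_eRk_ge hI.finite hIX ?_ hX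
  rw [← cast_matroidRk, hI.eRk_eq_encard, ← hI.finite.cast_ncard_eq]
  exact_mod_cast h

lemma matroidRk_union_add_matroidRk_inter_le (M : Matroid α) [M.RankFinite] (X Y : Set α) :
    matroidRk M (X ∪ Y) + matroidRk M (X ∩ Y) ≤ matroidRk M X + matroidRk M Y := by
  have h := M.eRk_inter_add_eRk_union_le X Y
  simp only [← cast_matroidRk] at h
  rw [add_comm]
  exact_mod_cast h

lemma Indep.isRkModularPair (hB : M.Indep B) (hX : M.IsBasis (B ∩ X) X)
    (hY : M.IsBasis (B ∩ Y) Y) : M.IsRkModularPair X Y := by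
  refine (M.matroidRk_union_add_matroidRk_inter_le X Y).antisymm ?_
  have hunion := (hB.subset (union_subset inter_subset_left inter_subset_left)).ncard_le_matroidRk
    (union_subset_union hX.subset hY.subset)
  have hinter := (hB.subset (inter_subset_left.trans inter_subset_left)).ncard_le_matroidRk
    (inter_subset_inter hX.subset hY.subset)
  have hcard := ncard_union_add_ncard_inter (B ∩ X) (B ∩ Y) hX.indep.finite hY.indep.finite
  rw [hX.matroidRk_eq_ncard, hY.matroidRk_eq_ncard]
  omega

lemma IsRkModularPair.inter_left_of_subset (hAZ : M.IsRkModularPair A Z) (hZY : Z ⊆ Y) :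
    M.IsRkModularPair (A ∩ Y) Z := by
  refine (M.matroidRk_union_add_matroidRk_inter_le _ _).antisymm ?_
  have hsub := M.matroidRk_union_add_matroidRk_inter_le ((A ∩ Y) ∪ Z) A
  have hunion : (A ∩ Y) ∪ Z ∪ A = A ∪ Z := by
    rw [union_right_comm, union_eq_right.2 inter_subset_left]
  have hinter : ((A ∩ Y) ∪ Z) ∩ A = A ∩ Y := by
    ext x
    have := @hZY x
    simp only [mem_union, mem_inter_iff]
    tauto
  have hAZY : A ∩ Y ∩ Z = A ∩ Z := by rw [inter_assoc, inter_eq_right.2 hZY]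
  rw [hunion, hinter] at hsub
  unfold IsRkModularPair at hAZ
  rw [hAZY]
  omega

lemma IsRkModularPair.isBasis_union_of_contract_isBasis (hC : M.IsBasis C Z)
    (hCA : M.IsBasis (C ∩ A) (A ∩ Z)) (hAZ : M.IsRkModularPair A Z)
    (hJ : (M ／ C).IsBasis J (A \ C)) : M.IsBasis (J ∪ C ∩ A) A := by
  have hJC : M.IsBasis (J ∪ C) (A ∪ C) := by
    simpa using hC.indep.union_isBasis_union_of_contract_isBasis hJ
  have hJA : J ⊆ A \ C := hJ.subset
  have hAE : A ⊆ M.E := subset_union_left.trans hJC.subset_ground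
  have hrk : matroidRk M (A ∪ Z) = matroidRk M (A ∪ C) := by
    have := hC.eRk_eq_eRk_union A
    rw [← cast_matroidRk, ← cast_matroidRk, union_comm C, union_comm Z] at this
    exact_mod_cast this.symm
  have hJfin := hJC.indep.finite.subset subset_union_left
  have hCfin := hC.indep.finite
  have hdisj : Disjoint J C := disjoint_of_subset_left hJA disjoint_sdiff_left
  have hcard := ncard_union_eq hdisj hJfin hCfin
  have hcard' : (J ∪ C ∩ A).ncard = J.ncard + (C ∩ A).ncard :=
    ncard_union_eq (hdisj.mono_right inter_subset_left) hJfin (hCfin.subset inter_subset_left)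
  refine (hJC.indep.subset (union_subset_union_right J inter_subset_left))
    |>.isBasis_of_matroidRk_le_ncard (union_subset (hJA.trans sdiff_subset) inter_subset_right)
      hAE ?_
  unfold IsRkModularPair at hAZ
  rw [hrk, hJC.matroidRk_eq_ncard, hC.matroidRk_eq_ncard, hCA.matroidRk_eq_ncard] at hAZ
  omega

lemma exists_isBasis_superset_inter {m : ℕ} {F : Fin (m + 1) → Set α} (hF : Monotone F)
    (hZY : Z ⊆ Y) (hY : Y ⊆ M.E) (hC : M.IsBasis C Z) (hCF : ∀ i, M.IsBasis (C ∩ F i) (F i ∩ Z))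
    (hmod : ∀ i, M.IsRkModularPair (F i) Z) :
    ∃ D, M.IsBasis D Y ∧ C ⊆ D ∧ ∀ i, M.IsBasis (D ∩ F i) (F i ∩ Y) := by
  have hCY : C ⊆ Y := hC.subset.trans hZY
  obtain ⟨J, hJ, hJF⟩ := (M ／ C).exists_isBasis_inter_of_monotone hF (Y := Y \ C)
    (sdiff_subset_sdiff_left hY)
  refine ⟨J ∪ C, ?_, subset_union_right, fun i => ?_⟩
  · simpa [sdiff_union_of_subset hCY] using hC.indep.union_isBasis_union_of_contract_isBasis hJ
  have hCFY : C ∩ (F i ∩ Y) = C ∩ F i := by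
    rw [← inter_assoc, inter_eq_left.2 (inter_subset_left.trans hCY)]
  have hFYZ : F i ∩ Y ∩ Z = F i ∩ Z := by rw [inter_assoc, inter_eq_right.2 hZY]
  have h := ((hmod i).inter_left_of_subset hZY).isBasis_union_of_contract_isBasis hC
    (by rw [hCFY, hFYZ]; exact hCF i) (by rw [inter_sdiff_assoc]; exact hJF i)
  rwa [hCFY, ← union_inter_distrib_right] at h

lemma exists_isBasis_inter_of_forall_isRkModularPair {m n : ℕ} {F : Fin (m + 1) → Set α}
    {G : Fin (n + 1) → Set α} (hF : Monotone F) (hG : Monotone G) (hGE : ∀ j, G j ⊆ M.E)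
    (hmod : ∀ i j, M.IsRkModularPair (F i) (G j)) (j : Fin (n + 1)) :
    ∃ C, M.IsBasis C (G j) ∧ (∀ i, M.IsBasis (C ∩ F i) (F i ∩ G j)) ∧
      ∀ j' ≤ j, M.IsBasis (C ∩ G j') (G j') := by
  induction j using Fin.induction with
  | zero =>
    obtain ⟨C, hC, hCF⟩ := M.exists_isBasis_inter_of_monotone hF (hGE 0)
    refine ⟨C, hC, hCF, fun j hj => ?_⟩
    obtain rfl := Fin.le_zero_iff.1 hj
    rwa [inter_eq_left.2 hC.subset]
  | succ j ih =>
    obtain ⟨C, hC, hCF, hCG⟩ := ih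
    obtain ⟨D, hD, hCD, hDF⟩ :=
      exists_isBasis_superset_inter hF (hG j.castSucc_le_succ) (hGE _) hC hCF (hmod · _)
    refine ⟨D, hD, hDF, fun j' hj' => ?_⟩
    obtain hj' | rfl := hj'.lt_or_eq
    · exact (hCG j' (Fin.le_castSucc_iff.2 hj')).isBasis_inter_of_subset_indep hD.indep hCD
        inter_subset_right
    · rwa [inter_eq_left.2 hD.subset]

end RankFinite

end Matroid

open Matroid in
theorem stmt7 {α : Type*} (M : Matroid α) [M.Finite] {m n : ℕ}
    (F : Fin (m + 1) → Set α) (G : Fin (n + 1) → Set α)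
    (hFmono : Monotone F) (hGmono : Monotone G)
    (hFtop : F (Fin.last m) = M.E) (hGtop : G (Fin.last n) = M.E) :
    (∃ B : Set α, M.IsBase B ∧ (∀ i, M.IsBasis (B ∩ F i) (F i)) ∧
        (∀ j, M.IsBasis (B ∩ G j) (G j))) ↔
    ∀ i j, matroidRk M (F i ∪ G j) + matroidRk M (F i ∩ G j) =
      matroidRk M (F i) + matroidRk M (G j) := by
  have hFE (i) : F i ⊆ M.E := hFtop ▸ hFmono (Fin.le_last i)
  have hGE (j) : G j ⊆ M.E := hGtop ▸ hGmono (Fin.le_last j)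
  refine ⟨fun ⟨B, hB, hBF, hBG⟩ i j => hB.indep.isRkModularPair (hBF i) (hBG j), fun hmod => ?_⟩
  obtain ⟨B, hB, hBF, hBG⟩ :=
    exists_isBasis_inter_of_forall_isRkModularPair hFmono hGmono hGE hmod (Fin.last n)
  rw [hGtop] at hB hBF
  exact ⟨B, isBasis_ground_iff.1 hB, fun i => by simpa only [inter_eq_left.2 (hFE i)] using hBF i,
    fun j => hBG j (Fin.le_last j)⟩
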